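/- arXiv:1411.2718 — 3 statements merged into one kernel-verified Lean document; each statement's English description precedes it below -/
import Mathlib

section
/- With the setup of the L* array for right-to-left lexicographically sorted strings of length K: for positions i ≤ j, the strings r_{i'}, ..., r_{j'} with i' the largest index ≤ i such that L*[i'-1] < k (or i' = 1) and j' the smallest index ≥ j such that L*[j'] < k (or j' = m), are exactly the strings of R whose length-k suffix equals the length-k suffix of r_i (equivalently, of r_j), provided r_i and r_j share a common suffix of length at least k. -/
/-!
Read right to left, `rtlLt` is the lexicographic order on reversed strings, and the length-`k`
suffix of a string is the reverse of the length-`k` prefix of its reverse. Cutting to a fixed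
length is monotone for the lexicographic order, so `t ↦ (r_t.reverse).take k` is monotone along
the sorted list `R`, and each of its level sets is an interval of indices. For strings of length
`K`, `L*[b] ≥ k` says exactly that `r_b` and `r_{b+1}` have the same value, so the chains of such
links from `i'` to `i` and from `j` to `j'` stay in the level set of `r_i`, while the broken links
`L*[i'-1] < k` and `L*[j'] < k` keep it inside `[i', j']`.
-/

/-- Right-to-left lexicographic (strict) order on strings. -/
def rtlLt {α : Type*} [LT α] (a b : List α) : Prop :=
  ∃ (ta tb s : List α) (c d : α), a = ta ++ c :: s ∧ b = tb ++ d :: s ∧ c < d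

/-- The length of the longest common suffix of two strings. -/
noncomputable def lcsLen {α : Type*} (a b : List α) : ℕ :=
  sSup {k | k ≤ a.length ∧ k ≤ b.length ∧ a.drop (a.length - k) = b.drop (b.length - k)}

section Strings

variable {α : Type*}

theorem List.take_le_take_of_le [LinearOrder α] {l₁ l₂ : List α} (h : l₁ ≤ l₂)
    (n : ℕ) : l₁.take n ≤ l₂.take n := by
  induction n generalizing l₁ l₂ with
  | zero => exact le_rfl
  | succ n ih =>
    obtain h | rfl := h.lt_or_eq
    · change List.Lex (· < ·) l₁ l₂ at h
      cases h with
      | nil => exact le_of_lt (List.Lex.nil : List.Lex (· < ·) [] _)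
      | rel hab => exact le_of_lt (List.Lex.rel hab : List.Lex (· < ·) _ _)
      | cons hl => exact List.cons_le_cons _ (ih (le_of_lt hl))
    · exact le_rfl

theorem rtlLt.lex_reverse [LT α] {a b : List α} (h : rtlLt a b) :
    List.Lex (· < ·) a.reverse b.reverse := by
  obtain ⟨ta, tb, s, c, d, rfl, rfl, hcd⟩ := h
  simpa using List.Lex.append_left _ (List.Lex.rel hcd) s.reverse

theorem reverse_take_le_of_rtlLt_or_eq [LinearOrder α] {a b : List α}
    (h : rtlLt a b ∨ a = b) (k : ℕ) : a.reverse.take k ≤ b.reverse.take k := by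
  obtain h | rfl := h
  · exact List.take_le_take_of_le (le_of_lt h.lex_reverse) k
  · exact le_rfl

theorem le_lcsLen_iff {a b : List α} {k : ℕ} (ha : k ≤ a.length)
    (hb : k ≤ b.length) : k ≤ lcsLen a b ↔ a.drop (a.length - k) = b.drop (b.length - k) := by
  have hbdd : BddAbove {n | n ≤ a.length ∧ n ≤ b.length ∧
      a.drop (a.length - n) = b.drop (b.length - n)} := ⟨a.length, fun n hn => hn.1⟩
  refine ⟨fun h => ?_, fun h => le_csSup hbdd ⟨ha, hb, h⟩⟩
  obtain ⟨hna, hnb, hn⟩ := Nat.sSup_mem ⟨0, by simp⟩ hbdd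
  have drop_eq : ∀ l : List α, lcsLen a b ≤ l.length →
      l.drop (l.length - k) = (l.drop (l.length - lcsLen a b)).drop (lcsLen a b - k) := by
    intro l hl
    rw [List.drop_drop]
    congr 1
    omega
  rw [drop_eq a hna, drop_eq b hnb]
  exact congrArg _ hn

theorem List.reverse_take_eq_iff_drop_eq {a b : List α} {k K : ℕ}
    (ha : a.length = K) (hb : b.length = K) :
    a.reverse.take k = b.reverse.take k ↔ a.drop (K - k) = b.drop (K - k) := by
  rw [List.take_reverse, List.take_reverse, ha, hb, List.reverse_inj]

theorem le_lcsLen_iff_of_length_eq {a b : List α} {k K : ℕ} (hk : k ≤ K)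
    (ha : a.length = K) (hb : b.length = K) :
    k ≤ lcsLen a b ↔ a.reverse.take k = b.reverse.take k := by
  rw [le_lcsLen_iff (ha ▸ hk) (hb ▸ hk), ha, hb, List.reverse_take_eq_iff_drop_eq ha hb]

end Strings

theorem eq_of_forall_eq_succ {β : Type*} {f : ℕ → β} {a c : ℕ}
    (h : ∀ b, a ≤ b → b < c → f b = f (b + 1)) (hac : a ≤ c) : f a = f c := by
  induction c, hac using Nat.le_induction with
  | base => rfl
  | succ c hac ih => exact (ih fun b hab hbc => h b hab (by omega)).trans (h c hac (by omega))

theorem MonotoneOn.eq_of_le_of_le_of_eq {α β : Type*} [Preorder α] [PartialOrder β]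
    {f : α → β} {s : Set α} (hf : MonotoneOn f s) {p q r : α} (hp : p ∈ s) (hq : q ∈ s)
    (hr : r ∈ s) (hpq : p ≤ q) (hqr : q ≤ r) (hpr : f p = f r) : f q = f p :=
  le_antisymm (hpr ▸ hf hq hr hqr) (hf hp hq hpq)

theorem List.Pairwise.monotoneOn_comp_getD_pred {γ β : Type*} [Preorder β] {l : List γ}
    {g : γ → β} (h : l.Pairwise fun a b => g a ≤ g b) (d : γ) :
    MonotoneOn (fun t => g (l.getD (t - 1) d)) (Set.Icc 1 l.length) := by
  rintro p ⟨hp, hpl⟩ q ⟨-, hql⟩ hpq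
  obtain rfl | hpq := hpq.eq_or_lt
  · exact le_rfl
  simp only [List.getD_eq_getElem _ _ (by omega : p - 1 < l.length),
    List.getD_eq_getElem _ _ (by omega : q - 1 < l.length)]
  exact List.pairwise_iff_getElem.1 h _ _ _ _ (by omega)

theorem mem_Icc_iff_eq_of_monotoneOn {β : Type*} [PartialOrder β] {f : ℕ → β}
    {m i j i' j' : ℕ} (hf : MonotoneOn f (Set.Icc 1 m)) (hi' : 1 ≤ i') (hi'i : i' ≤ i)
    (hij : i ≤ j) (hjj' : j ≤ j') (hj'm : j' ≤ m) (hfij : f i = f j)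
    (hleft : ∀ b, i' ≤ b → b < i → f b = f (b + 1))
    (hright : ∀ b, j ≤ b → b < j' → f b = f (b + 1))
    (hstart : 1 < i' → f (i' - 1) ≠ f i') (hstop : j' < m → f j' ≠ f (j' + 1))
    {t : ℕ} (ht : t ∈ Set.Icc 1 m) : t ∈ Set.Icc i' j' ↔ f t = f i := by
  obtain ⟨ht1, htm⟩ := ht
  have hfi' : f i' = f i := eq_of_forall_eq_succ hleft hi'i
  have hfj' : f j = f j' := eq_of_forall_eq_succ hright hjj'
  constructor
  · rintro ⟨hi't, htj'⟩
    rw [← hfi']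
    exact hf.eq_of_le_of_le_of_eq ⟨hi', by omega⟩ ⟨by omega, htm⟩ ⟨by omega, hj'm⟩ hi't htj'
      (hfi'.trans (hfij.trans hfj'))
  · intro hti
    constructor
    · by_contra! hti'
      have := hf.eq_of_le_of_le_of_eq ⟨ht1, by omega⟩ ⟨by omega, by omega⟩ ⟨by omega, by omega⟩
        (by omega : t ≤ i' - 1) (by omega : i' - 1 ≤ i) hti
      exact hstart (by omega) (this.trans (hti.trans hfi'.symm))
    · by_contra! htj'
      have := hf.eq_of_le_of_le_of_eq ⟨by omega, by omega⟩ ⟨by omega, by omega⟩ ⟨ht1, htm⟩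
        (by omega : j ≤ j' + 1) (by omega : j' + 1 ≤ t) (hfij.symm.trans hti.symm)
      exact hstop (by omega) (hfj'.symm.trans this.symm)

/-- Let `R = r_1, …, r_m` (1-indexed: `r_t = R.getD (t-1) []`) be length-`K` strings sorted
in right-to-left lexicographic order, with `L*[b] = lcsLen r_b r_{b+1}`.  Suppose `r_i` and
`r_j` (`i ≤ j`) share a common suffix of length at least `k`.  Let `i'` be the largest index
`≤ i` with `L*[i'-1] < k` (or `i' = 1`), and `j'` the smallest index `≥ j` with `L*[j'] < k`
(or `j' = m`).  Then `r_{i'}, …, r_{j'}` are exactly the strings of `R` whose length-`k`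
suffix equals the length-`k` suffix of `r_i`. -/
theorem stmt8 {α : Type*} [LinearOrder α] (K k : ℕ) (hk : k ≤ K)
    (R : List (List α))
    (hlen : ∀ r ∈ R, r.length = K)
    (hsort : R.Pairwise (fun a b => rtlLt a b ∨ a = b))
    (i j i' j' : ℕ)
    (h1i : 1 ≤ i) (hij : i ≤ j) (hjm : j ≤ R.length)
    (hcommon : k ≤ lcsLen (R.getD (i - 1) []) (R.getD (j - 1) []))
    (hi'1 : 1 ≤ i') (hi'le : i' ≤ i)
    (hi'prop : i' = 1 ∨ lcsLen (R.getD (i' - 2) []) (R.getD (i' - 1) []) < k)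
    (hi'max : ∀ b, i' ≤ b → b < i → k ≤ lcsLen (R.getD (b - 1) []) (R.getD b []))
    (hj'ge : j ≤ j') (hj'le : j' ≤ R.length)
    (hj'prop : j' = R.length ∨ lcsLen (R.getD (j' - 1) []) (R.getD j' []) < k)
    (hj'min : ∀ b, j ≤ b → b < j' → k ≤ lcsLen (R.getD (b - 1) []) (R.getD b [])) :
    ∀ t, 1 ≤ t → t ≤ R.length →
      ((i' ≤ t ∧ t ≤ j') ↔
        (R.getD (t - 1) []).drop (K - k) = (R.getD (i - 1) []).drop (K - k)) := by
  intro t ht1 htm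
  set r : ℕ → List α := fun n => R.getD (n - 1) []
  set f : ℕ → List α := fun n => (r n).reverse.take k
  have hr_len : ∀ n ∈ Set.Icc 1 R.length, (r n).length = K := fun n hn =>
    hlen _ (by simp only [r, List.getD_eq_getElem _ _ (by grind : n - 1 < R.length),
      List.getElem_mem])
  have hlcs : ∀ p ∈ Set.Icc 1 R.length, ∀ q ∈ Set.Icc 1 R.length,
      k ≤ lcsLen (r p) (r q) ↔ f p = f q := fun p hp q hq =>
    le_lcsLen_iff_of_length_eq hk (hr_len p hp) (hr_len q hq)
  have hmono : MonotoneOn f (Set.Icc 1 R.length) :=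
    (hsort.imp (reverse_take_le_of_rtlLt_or_eq · k)).monotoneOn_comp_getD_pred []
  rw [← List.reverse_take_eq_iff_drop_eq (hr_len t ⟨ht1, htm⟩) (hr_len i ⟨h1i, by omega⟩),
    ← Set.mem_Icc]
  refine mem_Icc_iff_eq_of_monotoneOn hmono hi'1 hi'le hij hj'ge hj'le
    ((hlcs i ⟨h1i, by omega⟩ j ⟨by omega, hjm⟩).1 hcommon)
    (fun b hb hbi =>
      (hlcs b ⟨by omega, by omega⟩ (b + 1) ⟨by omega, by omega⟩).1 (hi'max b hb hbi))
    (fun b hb hbj' =>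
      (hlcs b ⟨by omega, by omega⟩ (b + 1) ⟨by omega, by omega⟩).1 (hj'min b hb hbj'))
    (fun hi' heq => ?_) (fun hj' heq => ?_) ⟨ht1, htm⟩
  · refine (hi'prop.resolve_left (by omega)).not_ge ?_
    -- `r (i' - 1)` unfolds to `R.getD (i' - 1 - 1) []`, definitionally `R.getD (i' - 2) []`
    exact (hlcs (i' - 1) ⟨by omega, by omega⟩ i' ⟨hi'1, by omega⟩).2 heq
  · refine (hj'prop.resolve_left (by omega)).not_ge ?_
    exact (hlcs j' ⟨by omega, hj'le⟩ (j' + 1) ⟨by omega, by omega⟩).2 heq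
end

section
/- With the L* array as above, fix k ≤ K and an interval [i, j] of indices such that L*[i-1] < k (or i = 1) and L*[j] < k (or j = m), and all strings r_i, ..., r_j share a common suffix of length k-1, and let B = {b : i-1 ≤ b ≤ j, b = i-1 or b = j or L*[b] < k}. Then for each pair of consecutive elements (b, b') of B, the strings r_{b+1}, ..., r_{b'} all share the same length-k suffix, and strings in different such blocks have different length-k suffixes. -/
/-- The split set `B = {b : i-1 ≤ b ≤ j, b = i-1 ∨ b = j ∨ L*[b] < k}` (1-indexed;
`L*[b] = lcsLen r_b r_{b+1} = lcsLen (R.getD (b-1) []) (R.getD b [])`). -/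
noncomputable def splitSet {α : Type*} (R : List (List α)) (i j k : ℕ) : Set ℕ :=
  {b | i - 1 ≤ b ∧ b ≤ j ∧
    (b = i - 1 ∨ b = j ∨ lcsLen (R.getD (b - 1) []) (R.getD b []) < k)}

private lemma drop_shift {α : Type*} (a : List α) (p q : ℕ) (hpq : p ≤ q) (hq : q ≤ a.length) :
    a.drop (a.length - p) = (a.drop (a.length - q)).drop (q - p) := by
  rw [List.drop_drop]
  congr 1
  omega

private lemma lcs_bdd {α : Type*} (a b : List α) :
    BddAbove {n | n ≤ a.length ∧ n ≤ b.length ∧ a.drop (a.length - n) = b.drop (b.length - n)} :=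
  ⟨a.length, fun _ hn => hn.1⟩

private lemma lcs_ge {α : Type*} (a b : List α) (k : ℕ) (hk : k ≤ lcsLen a b) :
    a.drop (a.length - k) = b.drop (b.length - k) := by
  have hmem : lcsLen a b ∈ {n | n ≤ a.length ∧ n ≤ b.length ∧
      a.drop (a.length - n) = b.drop (b.length - n)} := by
    apply Nat.sSup_mem ⟨0, by simp⟩ (lcs_bdd a b)
  obtain ⟨h1, h2, h3⟩ := hmem
  rw [drop_shift a k (lcsLen a b) hk h1, drop_shift b k (lcsLen a b) hk h2, h3]

private lemma lcs_lt {α : Type*} (a b : List α) (k : ℕ) (hka : k ≤ a.length) (hkb : k ≤ b.length)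
    (hlt : lcsLen a b < k) : a.drop (a.length - k) ≠ b.drop (b.length - k) := by
  intro heq
  have : k ≤ lcsLen a b := le_csSup (lcs_bdd a b) ⟨hka, hkb, heq⟩
  omega

/-- Let `R = r_1, …, r_m` (1-indexed) be length-`K` strings sorted in right-to-left
lexicographic order, `L*` the longest-common-suffix array, and fix `k ≤ K` and an interval
`[i, j]` with `L*[i-1] < k` (or `i = 1`), `L*[j] < k` (or `j = m`), all of whose strings
share the same length-`(k-1)` suffix.  Let `B = {b : i-1 ≤ b ≤ j, b = i-1 ∨ b = j ∨
L*[b] < k}`.  Then for each pair of consecutive elements `(b, b')` of `B` the strings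
`r_{b+1}, …, r_{b'}` all share the same length-`k` suffix, and strings lying in different
such blocks have different length-`k` suffixes. -/
theorem stmt9 {α : Type*} [LinearOrder α] (K k : ℕ) (hk1 : 1 ≤ k) (hkK : k ≤ K)
    (R : List (List α))
    (hlen : ∀ r ∈ R, r.length = K)
    (hsort : R.Pairwise (fun a b => rtlLt a b ∨ a = b))
    (i j : ℕ) (h1i : 1 ≤ i) (hij : i ≤ j) (hjm : j ≤ R.length)
    (hleft : i = 1 ∨ lcsLen (R.getD (i - 2) []) (R.getD (i - 1) []) < k)
    (hright : j = R.length ∨ lcsLen (R.getD (j - 1) []) (R.getD j []) < k)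
    (hshare : ∀ t t', i ≤ t → t ≤ j → i ≤ t' → t' ≤ j →
      (R.getD (t - 1) []).drop (K - (k - 1)) = (R.getD (t' - 1) []).drop (K - (k - 1))) :
    (∀ b b', b ∈ splitSet R i j k → b' ∈ splitSet R i j k → b < b' →
      (∀ c ∈ splitSet R i j k, ¬(b < c ∧ c < b')) →
      ∀ t t', b < t → t ≤ b' → b < t' → t' ≤ b' →
        (R.getD (t - 1) []).drop (K - k) = (R.getD (t' - 1) []).drop (K - k)) ∧
    (∀ b b' c c', b ∈ splitSet R i j k → b' ∈ splitSet R i j k → b < b' →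
      (∀ e ∈ splitSet R i j k, ¬(b < e ∧ e < b')) →
      c ∈ splitSet R i j k → c' ∈ splitSet R i j k → c < c' →
      (∀ e ∈ splitSet R i j k, ¬(c < e ∧ e < c')) →
      b' ≤ c →
      ∀ t t', b < t → t ≤ b' → c < t' → t' ≤ c' →
        (R.getD (t - 1) []).drop (K - k) ≠ (R.getD (t' - 1) []).drop (K - k)) := by
  -- length of each relevant string is K
  have hK : ∀ t : ℕ, t < R.length → (R.getD t []).length = K := by
    intro t ht
    rw [List.getD_eq_getElem R [] ht]
    exact hlen _ (R.getElem_mem ht)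
  set s : List α := (R.getD (i - 1) []).drop (K - (k - 1)) with hs
  -- every string in [i,j] has k-suffix of the form c :: s
  have hform : ∀ t : ℕ, i ≤ t → t ≤ j → ∃ c : α,
      (R.getD (t - 1) []).drop (K - k) = c :: s := by
    intro t hit htj
    have ht1 : t - 1 < R.length := by omega
    have hlK : (R.getD (t - 1) []).length = K := hK _ ht1
    have hlt : K - k < (R.getD (t - 1) []).length := by omega
    refine ⟨(R.getD (t - 1) [])[K - k], ?_⟩
    rw [List.drop_eq_getElem_cons hlt]
    congr 1
    have he : K - k + 1 = K - (k - 1) := by omega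
    rw [he, hs]
    exact hshare t i hit htj le_rfl hij
  -- adjacent comparison from sortedness
  have hadj : ∀ t : ℕ, i ≤ t → t + 1 ≤ j →
      ((R.getD (t - 1) []).drop (K - k) = (R.getD t []).drop (K - k)) ∨
      (∃ c d : α, (R.getD (t - 1) []).drop (K - k) = c :: s ∧
        (R.getD t []).drop (K - k) = d :: s ∧ c < d) := by
    intro t hit htj
    have ht1 : t - 1 < R.length := by omega
    have ht2 : t < R.length := by omega
    set a := R.getD (t - 1) [] with ha
    set b := R.getD t [] with hb
    have haK : a.length = K := hK _ ht1
    have hbK : b.length = K := hK _ ht2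
    have hrel : rtlLt a b ∨ a = b := by
      have h := hsort.rel_get_of_lt (a := ⟨t - 1, ht1⟩) (b := ⟨t, ht2⟩)
        (by rw [Fin.lt_def]; simp; omega)
      simp only [List.get_eq_getElem] at h
      rw [← List.getD_eq_getElem R [] ht1, ← List.getD_eq_getElem R [] ht2] at h
      rw [← ha, ← hb] at h
      exact h
    have hshared : a.drop (K - (k - 1)) = b.drop (K - (k - 1)) := by
      have h1 := hshare t i hit (by omega) le_rfl hij
      have h2 := hshare (t + 1) i (by omega) htj le_rfl hij
      simp only [Nat.add_sub_cancel] at h2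
      rw [← ha] at h1; rw [← hb] at h2
      rw [h1, h2]
    rcases hrel with hltc | heq
    · obtain ⟨ta, tb, s0, c, d, hae, hbe, hcd⟩ := hltc
      have hta : ta.length = K - (s0.length + 1) ∧ s0.length + 1 ≤ K := by
        have := congrArg List.length hae
        simp [haK] at this
        omega
      have htb : tb.length = K - (s0.length + 1) := by
        have := congrArg List.length hbe
        simp [hbK] at this
        omega
      have hadrop : a.drop (K - (s0.length + 1)) = c :: s0 := by
        rw [hae, ← hta.1, List.drop_left]
      have hbdrop : b.drop (K - (s0.length + 1)) = d :: s0 := by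
        rw [hbe, ← htb, List.drop_left]
      rcases lt_trichotomy (s0.length + 1) k with hc | hc | hc
      · -- s0.length + 1 ≤ k - 1 : contradiction
        exfalso
        have e1 : a.drop (K - (s0.length + 1)) =
            (a.drop (K - (k - 1))).drop ((k - 1) - (s0.length + 1)) := by
          conv_lhs => rw [← haK]
          rw [← haK]
          exact drop_shift a (s0.length + 1) (k - 1) (by omega) (by omega)
        have e2 : b.drop (K - (s0.length + 1)) =
            (b.drop (K - (k - 1))).drop ((k - 1) - (s0.length + 1)) := by
          rw [← hbK]
          exact drop_shift b (s0.length + 1) (k - 1) (by omega) (by omega)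
        have hcontra : (c : α) :: s0 = d :: s0 := by
          rw [← hadrop, ← hbdrop, e1, e2, hshared]
        have : c = d := by injection hcontra
        exact absurd hcd (by simp [this])
      · -- s0.length + 1 = k : strict case
        right
        have hs0 : s0 = s := by
          have hds : s0 = a.drop (K - (k - 1)) := by
            have e1 : a.drop (K - (k - 1)) =
                (a.drop (K - (s0.length + 1))).drop ((s0.length + 1) - (k - 1)) := by
              rw [← haK]
              exact drop_shift a (k - 1) (s0.length + 1) (by omega) (by omega)
            rw [e1, hadrop]
            have h1 : s0.length + 1 - (k - 1) = 1 := by omega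
            rw [h1]
            simp
          rw [hds, hs, ha]
          exact hshare t i hit (by omega) le_rfl hij
        refine ⟨c, d, ?_, ?_, hcd⟩
        · rw [← hc]
          rw [← hs0]
          exact hadrop
        · rw [← hc]
          rw [← hs0]
          exact hbdrop
      · -- k ≤ s0.length : equal case
        left
        have e1 : a.drop (K - k) =
            (a.drop (K - (s0.length + 1))).drop ((s0.length + 1) - k) := by
          rw [← haK]
          exact drop_shift a k (s0.length + 1) (by omega) (by omega)
        have e2 : b.drop (K - k) =
            (b.drop (K - (s0.length + 1))).drop ((s0.length + 1) - k) := by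
          rw [← hbK]
          exact drop_shift b k (s0.length + 1) (by omega) (by omega)
        rw [e1, e2, hadrop, hbdrop]
        have hn : s0.length + 1 - k = (s0.length - k) + 1 := by omega
        rw [hn]
        simp
    · left
      rw [heq]
  -- monotonicity along [i, j]
  have hmono : ∀ t u : ℕ, i ≤ t → t ≤ u → u ≤ j →
      ((R.getD (t - 1) []).drop (K - k) = (R.getD (u - 1) []).drop (K - k)) ∨
      (∃ c d : α, (R.getD (t - 1) []).drop (K - k) = c :: s ∧
        (R.getD (u - 1) []).drop (K - k) = d :: s ∧ c < d) := by
    intro t u hit htu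
    induction u, htu using Nat.le_induction with
    | base => intro _; left; rfl
    | succ u htu ih =>
      intro huj
      have hstep := hadj u (by omega) huj
      simp only [Nat.add_sub_cancel]
      have ih' := ih (by omega)
      rcases ih' with h1 | ⟨c, d, hc, hd, hcd⟩
      · rcases hstep with h2 | ⟨c, d, hc, hd, hcd⟩
        · left; rw [h1, h2]
        · right; exact ⟨c, d, h1 ▸ hc, hd, hcd⟩
      · rcases hstep with h2 | ⟨c', d', hc', hd', hcd'⟩
        · right; exact ⟨c, d, hc, h2 ▸ hd, hcd⟩
        · right
          refine ⟨c, d', hc, hd', ?_⟩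
          have hdc : d = c' := by
            rw [hd] at hc'; injection hc'
          rw [hdc] at hcd
          exact hcd.trans hcd'
  -- interval lemma: equal endpoints force equality in between
  have hintv : ∀ t u t' : ℕ, i ≤ t → t ≤ u → u ≤ t' → t' ≤ j →
      (R.getD (t - 1) []).drop (K - k) = (R.getD (t' - 1) []).drop (K - k) →
      (R.getD (u - 1) []).drop (K - k) = (R.getD (t - 1) []).drop (K - k) := by
    intro t u t' hit htu hut' ht'j heq
    rcases hmono t u hit htu (by omega) with h1 | ⟨c, d, hc, hd, hcd⟩
    · exact h1.symm
    · rcases hmono u t' (by omega) hut' ht'j with h2 | ⟨c', d', hc', hd', hcd'⟩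
      · exact h2.trans heq.symm
      · exfalso
        have e1 : c = d' := by
          rw [hc, hd'] at heq; injection heq
        have e2 : d = c' := by
          rw [hd] at hc'; injection hc'
        rw [e2] at hcd
        have hlt : c < d' := hcd.trans hcd'
        rw [e1] at hlt
        exact lt_irrefl _ hlt
  -- within a block, all suffixes equal
  have hchain : ∀ b b', b ∈ splitSet R i j k → b' ∈ splitSet R i j k → b < b' →
      (∀ c ∈ splitSet R i j k, ¬(b < c ∧ c < b')) →
      ∀ t u, b < t → t ≤ u → u ≤ b' →
      (R.getD (t - 1) []).drop (K - k) = (R.getD (u - 1) []).drop (K - k) := by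
    intro b b' hb hb' hbb' hnone t u hbt htu
    simp only [splitSet, Set.mem_setOf_eq] at hb hb'
    induction u, htu using Nat.le_induction with
    | base => intro _; rfl
    | succ u htu ih =>
      intro hub'
      have hfu := ih (by omega)
      have humem : u ∉ splitSet R i j k := fun h => hnone u h ⟨by omega, by omega⟩
      have hnotsplit : ¬ (u = i - 1 ∨ u = j ∨
          lcsLen (R.getD (u - 1) []) (R.getD u []) < k) := by
        intro h
        exact humem (by simp only [splitSet, Set.mem_setOf_eq]; exact ⟨by omega, by omega, h⟩)
      push_neg at hnotsplit
      have hlk : k ≤ lcsLen (R.getD (u - 1) []) (R.getD u []) :=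
        hnotsplit.2.2
      have hgoal := lcs_ge _ _ k hlk
      rw [hK (u - 1) (by omega), hK u (by omega)] at hgoal
      simp only [Nat.add_sub_cancel]
      rw [hfu]
      exact hgoal
  constructor
  · intro b b' hb hb' hbb' hnone t t' hbt htb' hbt' ht'b'
    rcases le_total t t' with h | h
    · exact hchain b b' hb hb' hbb' hnone t t' hbt h ht'b'
    · exact (hchain b b' hb hb' hbb' hnone t' t hbt' h htb').symm
  · intro b b' c c' hb hb' hbb' hnb hc hc' hcc' hnc hb'c t t' hbt htb' hct' ht'c' heq
    simp only [splitSet, Set.mem_setOf_eq] at hb hb' hc hc'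
    have hti : i ≤ t := by omega
    have ht'j : t' ≤ j := by omega
    have hclt : lcsLen (R.getD (c - 1) []) (R.getD c []) < k := by
      rcases hc.2.2 with h | h | h
      · omega
      · omega
      · exact h
    have hne := lcs_lt (R.getD (c - 1) []) (R.getD c []) k
      (by rw [hK (c - 1) (by omega)]; exact hkK)
      (by rw [hK c (by omega)]; exact hkK) hclt
    rw [hK (c - 1) (by omega), hK c (by omega)] at hne
    have h1 := hintv t c t' hti (by omega) (by omega) ht'j heq
    have h2 := hintv t (c + 1) t' hti (by omega) (by omega) ht'j heq
    simp only [Nat.add_sub_cancel] at h2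
    exact hne (h1.trans h2.symm)
end

section
/- For the function forward in the variable-order de Bruijn graph: if v is a node of order k with label α (a k-mer), a ∈ Σ, and w = maxlen(v, a) is a node of order K whose label β ends with α and which has an outgoing edge labelled a, then shorter(forward(w, a), k) is the node of order k labelled by (the last k-1 characters of α) followed by a, and this is independent of which such w is chosen. -/
/-- A `k`-mer of a set of strings `S` is a length-`k` contiguous substring of some member. -/
def kmers {α : Type*} (S : Set (List α)) (k : ℕ) : Set (List α) :=
  {w | w.length = k ∧ ∃ s ∈ S, w <:+: s}

/-- Correctness of `forward` via a maximal-order representative: if `v` is a node of order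
`k` with label the `k`-mer `v`, and `w = maxlen(v, a)` is any node of order `K` whose label
`β` ends with `v` and which has an outgoing edge labelled `a` (i.e. `β·a` is a `(K+1)`-mer),
then `shorter(forward(w, a), k)` — the length-`k` suffix of `β[2..K]·a` — equals the node of
order `k` labelled `v[2..k]·a`, independently of which such `β` is chosen; moreover this
label is indeed a `k`-mer of `S`. -/
theorem stmt15 {α : Type*} (S : Set (List α)) (K k : ℕ) (h1 : 1 ≤ k) (hkK : k ≤ K)
    (a : α) (v β : List α)
    (hv : v ∈ kmers S k) (hβ : β ∈ kmers S K)
    (hsuf : v <:+ β) (hedge : β ++ [a] ∈ kmers S (K + 1)) :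
    v.drop 1 ++ [a] ∈ kmers S k ∧
    (β.drop 1 ++ [a]).drop (K - k) = v.drop 1 ++ [a] := by
  obtain ⟨hvlen, _⟩ := hv
  obtain ⟨hβlen, _⟩ := hβ
  obtain ⟨hlen, s, hs, hinf⟩ := hedge
  have hveq : v = β.drop (K - k) := by
    obtain ⟨t, ht⟩ := hsuf
    have htlen : t.length = K - k := by
      have := congrArg List.length ht
      simp [hvlen, hβlen] at this
      omega
    rw [← ht, List.drop_append_of_le_length (le_of_eq htlen.symm),
      List.drop_eq_nil_of_le htlen.le, List.nil_append]
  constructor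
  · refine ⟨by simp [hvlen]; omega, s, hs, ?_⟩
    refine List.IsInfix.trans ?_ hinf
    apply List.IsSuffix.isInfix
    obtain ⟨t, ht⟩ := hsuf
    refine ⟨t ++ v.take 1, ?_⟩
    rw [← List.append_assoc, List.append_assoc t, List.take_append_drop, ht]
  · rw [List.drop_append_of_le_length (by simp [hβlen]; omega), hveq, List.drop_drop,
      List.drop_drop]
    congr 2
    omega
end
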